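/- arXiv:1905.03797 — 6 statements merged into one kernel-verified Lean document; each statement's English description precedes it below -/
import Mathlib

section
/- The number of transfer systems on the four-element chain {0 < 1 < 2 < 3} is exactly 14. -/
/-- A transfer system on the chain `{0 < 1 < ... < n}`: a relation contained in
the order relation (and supported on the chain), reflexive, transitive, and
satisfying restriction. -/
def IsTransferSystem (n : ℕ) (R : ℕ → ℕ → Prop) : Prop :=
  (∀ a b, R a b → a ≤ b ∧ b ≤ n) ∧
  (∀ a, a ≤ n → R a a) ∧
  (∀ a b c, R a b → R b c → R a c) ∧
  (∀ k h m, R k h → m ≤ h → R (min k m) m)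

def PB (B : Fin 4 → Fin 4 → Bool) : Prop :=
  (∀ a b, B a b = true → a ≤ b) ∧
  (∀ a, B a a = true) ∧
  (∀ a b c, B a b = true → B b c = true → B a c = true) ∧
  (∀ k h m, B k h = true → m ≤ h → B (min k m) m = true)

instance : DecidablePred PB := fun B => by unfold PB; infer_instance

open Classical in
noncomputable def myEquiv : {R : ℕ → ℕ → Prop // IsTransferSystem 3 R} ≃ {B : Fin 4 → Fin 4 → Bool // PB B} where
  toFun R := ⟨fun a b => decide (R.1 a b), by
    obtain ⟨R, h1, h2, h3, h4⟩ := R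
    refine ⟨?_, ?_, ?_, ?_⟩
    · intro a b hab
      have := (h1 a b (of_decide_eq_true hab)).1
      exact_mod_cast this
    · intro a; exact decide_eq_true (h2 a (by omega))
    · intro a b c hab hbc
      exact decide_eq_true (h3 a b c (of_decide_eq_true hab) (of_decide_eq_true hbc))
    · intro k h m hkh hmh
      have := h4 k h m (of_decide_eq_true hkh) (by exact_mod_cast hmh)
      apply decide_eq_true
      have hmin : ((min k m : Fin 4) : ℕ) = min (k : ℕ) (m : ℕ) := by
        rcases le_total k m with h' | h'
        · simp [min_eq_left h', min_eq_left (show (k:ℕ) ≤ m from h')]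
        · simp [min_eq_right h', min_eq_right (show (m:ℕ) ≤ k from h')]
      rwa [← hmin] at this⟩
  invFun B := ⟨fun a b => ∃ (ha : a < 4) (hb : b < 4), B.1 ⟨a, ha⟩ ⟨b, hb⟩ = true, by
    obtain ⟨B, h1, h2, h3, h4⟩ := B
    refine ⟨?_, ?_, ?_, ?_⟩
    · rintro a b ⟨ha, hb, hab⟩
      have := h1 ⟨a, ha⟩ ⟨b, hb⟩ hab
      constructor
      · exact_mod_cast this
      · omega
    · intro a ha
      exact ⟨by omega, by omega, h2 _⟩
    · rintro a b c ⟨ha, hb, hab⟩ ⟨hb', hc, hbc⟩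
      refine ⟨ha, hc, h3 _ _ _ hab ?_⟩
      convert hbc using 2
    · rintro k h m ⟨hk, hh, hkh⟩ hmh
      have hm : m < 4 := by omega
      have := h4 ⟨k, hk⟩ ⟨h, hh⟩ ⟨m, hm⟩ hkh (by exact_mod_cast hmh)
      have hmin : (min ⟨k, hk⟩ ⟨m, hm⟩ : Fin 4) = ⟨min k m, by omega⟩ := by
        apply Fin.ext
        show ((min ⟨k, hk⟩ ⟨m, hm⟩ : Fin 4) : ℕ) = min (k : ℕ) m
        rcases Nat.le_total k m with h' | h'
        · simp [min_eq_left h', min_eq_left (show (⟨k,hk⟩:Fin 4) ≤ ⟨m,hm⟩ from h')]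
        · simp [min_eq_right h', min_eq_right (show (⟨m,hm⟩:Fin 4) ≤ ⟨k,hk⟩ from h')]
      rw [hmin] at this
      exact ⟨by omega, hm, this⟩⟩
  left_inv R := by
    obtain ⟨R, h1, h2, h3, h4⟩ := R
    apply Subtype.ext
    funext a b
    apply propext
    constructor
    · rintro ⟨ha, hb, hab⟩
      exact of_decide_eq_true hab
    · intro hab
      have := h1 a b hab
      exact ⟨by omega, by omega, decide_eq_true hab⟩
  right_inv B := by
    apply Subtype.ext
    funext a b
    dsimp only
    by_cases h : B.1 a b = true
    · rw [h]
      simp only [decide_eq_true_eq]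
      exact ⟨a.isLt, b.isLt, by simpa using h⟩
    · rw [Bool.not_eq_true] at h
      rw [h]
      simp only [decide_eq_false_iff_not]
      rintro ⟨ha, hb, hab⟩
      rw [Fin.eta, Fin.eta, h] at hab
      exact Bool.false_ne_true hab

def toB (f : Fin 6 → Bool) : Fin 4 → Fin 4 → Bool := fun a b =>
  if a = b then true
  else if a = 0 ∧ b = 1 then f 0
  else if a = 0 ∧ b = 2 then f 1
  else if a = 0 ∧ b = 3 then f 2
  else if a = 1 ∧ b = 2 then f 3
  else if a = 1 ∧ b = 3 then f 4
  else if a = 2 ∧ b = 3 then f 5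
  else false

instance : DecidablePred (fun f => PB (toB f)) := fun f => by unfold PB; infer_instance

lemma toB_eq (B : Fin 4 → Fin 4 → Bool) (hB : PB B) :
    toB ![B 0 1, B 0 2, B 0 3, B 1 2, B 1 3, B 2 3] = B := by
  have h2 := hB.2.1
  funext a b
  have h1 := hB.1 a b
  fin_cases a <;> fin_cases b <;>
  first
    | rfl
    | exact (h2 _).symm
    | (rw [Bool.eq_false_iff.mpr fun h => absurd (h1 h) (by decide)]; rfl)

def myEquiv2 : {B : Fin 4 → Fin 4 → Bool // PB B} ≃ {f : Fin 6 → Bool // PB (toB f)} where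
  toFun B := ⟨![B.1 0 1, B.1 0 2, B.1 0 3, B.1 1 2, B.1 1 3, B.1 2 3], by
    rw [toB_eq B.1 B.2]; exact B.2⟩
  invFun f := ⟨toB f.1, f.2⟩
  left_inv B := Subtype.ext (toB_eq B.1 B.2)
  right_inv f := by
    apply Subtype.ext
    funext i
    fin_cases i <;> rfl

set_option maxRecDepth 10000 in
set_option maxHeartbeats 1000000 in
theorem num_transfer_systems_chain_3 :
    Nat.card {R : ℕ → ℕ → Prop // IsTransferSystem 3 R} = 14 := by
  rw [Nat.card_congr (myEquiv.trans myEquiv2), Nat.card_eq_fintype_card]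
  decide
end

section
/- For every natural number n, the number of transfer systems on the chain {0 < 1 < ... < n} equals the (n+1)-st Catalan number Cat(n+1) = (2(n+1))! / ((n+2)! (n+1)!). -/
/-!
A transfer system `R` on `{0, …, n}` is determined by `f a = max {b | R a b}`, since
restriction gives `R a b ↔ a ≤ b ≤ f a`. Transitivity then says exactly that the intervals
`[a, f a]` are nested: `[j, f j] ⊆ [a, f a]` whenever `j ∈ [a, f a]`. A nested family on a
window `[a, a + m)` splits at its first point into the families on `(a, f a]` and on
`(f a, a + m)`, and this splitting identifies nested families on `n + 1` points with binary
trees on `n + 1` nodes, of which there are `catalan (n + 1)`.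
-/

open BinaryTree Set

def IsNestedOn (a m : ℕ) (f : ℕ → ℕ) : Prop :=
  ∀ i, a ≤ i → i < a + m → i ≤ f i ∧ f i < a + m ∧ ∀ j, i ≤ j → j ≤ f i → f j ≤ f i

namespace IsNestedOn

variable {a m : ℕ} {f : ℕ → ℕ}

theorem congr {g : ℕ → ℕ} (hg : IsNestedOn a m g) (hfg : EqOn f g (Ico a (a + m))) :
    IsNestedOn a m f := by
  intro i hi1 hi2
  obtain ⟨h1, h2, h3⟩ := hg i hi1 hi2
  rw [hfg ⟨hi1, hi2⟩]
  refine ⟨h1, h2, fun j hj1 hj2 => ?_⟩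
  rw [hfg ⟨by omega, by omega⟩]
  exact h3 j hj1 hj2

theorem left (h : IsNestedOn a (m + 1) f) : IsNestedOn (a + 1) (f a - a) f := by
  obtain ⟨ha1, ha2, ha⟩ := h a le_rfl (by omega)
  intro i hi1 hi2
  obtain ⟨h1, -, h3⟩ := h i (by omega) (by omega)
  have := ha i (by omega) (by omega)
  exact ⟨h1, by omega, h3⟩

theorem right (h : IsNestedOn a (m + 1) f) : IsNestedOn (f a + 1) (m - (f a - a)) f := by
  obtain ⟨ha1, ha2, -⟩ := h a le_rfl (by omega)
  intro i hi1 hi2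
  obtain ⟨h1, h2, h3⟩ := h i (by omega) (by omega)
  exact ⟨h1, by omega, h3⟩

theorem node {p q : ℕ} (ha : f a = a + p) (hl : IsNestedOn (a + 1) p f)
    (hr : IsNestedOn (a + p + 1) q f) : IsNestedOn a (p + q + 1) f := by
  intro i hi1 hi2
  rcases Nat.lt_trichotomy i a with hia | rfl | hai
  · omega
  · refine ⟨by omega, by omega, fun j hj1 hj2 => ?_⟩
    rcases hj1.eq_or_lt with rfl | hij
    · exact le_rfl
    · have := (hl j (by omega) (by omega)).2.1
      omega
  · by_cases hip : i ≤ a + p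
    · obtain ⟨h1, h2, h3⟩ := hl i (by omega) (by omega)
      exact ⟨h1, by omega, h3⟩
    · obtain ⟨h1, h2, h3⟩ := hr i (by omega) (by omega)
      exact ⟨h1, by omega, h3⟩

end IsNestedOn

def nestedOfTree (a : ℕ) : BinaryTree Unit → ℕ → ℕ
  | nil => id
  | node _ l r => fun i =>
      if i = a then a + l.numNodes
      else if i ≤ a + l.numNodes then nestedOfTree (a + 1) l i
      else nestedOfTree (a + l.numNodes + 1) r i

def treeOfNested (f : ℕ → ℕ) : ℕ → ℕ → BinaryTree Unit
  | _, 0 => nil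
  | a, m + 1 =>
      -- the `min` only secures termination: for `f` nested on `[a, a + m + 1)`, `f a - a ≤ m`
      node () (treeOfNested f (a + 1) (min (f a - a) m))
        (treeOfNested f (f a + 1) (m - (f a - a)))
  termination_by _ m => m
  decreasing_by all_goals omega

section Trees

variable {a i : ℕ} {v : Unit} {l r : BinaryTree Unit}

theorem nestedOfTree_node_self : nestedOfTree a (node v l r) a = a + l.numNodes := by
  simp [nestedOfTree]

theorem nestedOfTree_node_of_le (hia : i ≠ a) (hi : i ≤ a + l.numNodes) :
    nestedOfTree a (node v l r) i = nestedOfTree (a + 1) l i := by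
  simp [nestedOfTree, hia, hi]

theorem nestedOfTree_node_of_lt (hi : a + l.numNodes < i) :
    nestedOfTree a (node v l r) i = nestedOfTree (a + l.numNodes + 1) r i := by
  simp [nestedOfTree, show i ≠ a by omega, show ¬i ≤ a + l.numNodes by omega]

theorem nestedOfTree_of_notMem (t : BinaryTree Unit) (hi : i ∉ Ico a (a + t.numNodes)) :
    nestedOfTree a t i = i := by
  induction t generalizing a with
  | nil => rfl
  | node v l r ihl ihr =>
    simp only [mem_Ico, numNodes, not_and_or, not_le, not_lt] at hi
    by_cases hil : i ≤ a + l.numNodes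
    · rw [nestedOfTree_node_of_le (by omega) hil, ihl (by simp; omega)]
    · rw [nestedOfTree_node_of_lt (by omega), ihr (by simp; omega)]

theorem isNestedOn_nestedOfTree (t : BinaryTree Unit) (a : ℕ) :
    IsNestedOn a t.numNodes (nestedOfTree a t) := by
  induction t generalizing a with
  | nil => intro i hi1 hi2; rw [numNodes] at hi2; omega
  | node v l r ihl ihr =>
    rw [numNodes]
    refine .node nestedOfTree_node_self ((ihl (a + 1)).congr fun i hi => ?_)
      ((ihr (a + l.numNodes + 1)).congr fun i hi => ?_)
    · exact nestedOfTree_node_of_le (by grind) (by grind)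
    · exact nestedOfTree_node_of_lt (by grind)

end Trees

theorem treeOfNested_zero (f : ℕ → ℕ) (a : ℕ) : treeOfNested f a 0 = nil := by
  rw [treeOfNested]

theorem treeOfNested_succ (f : ℕ → ℕ) (a m : ℕ) :
    treeOfNested f a (m + 1) =
      node () (treeOfNested f (a + 1) (min (f a - a) m))
        (treeOfNested f (f a + 1) (m - (f a - a))) := by
  rw [treeOfNested]

theorem numNodes_treeOfNested {f : ℕ → ℕ} {a m : ℕ} (h : IsNestedOn a m f) :
    (treeOfNested f a m).numNodes = m := by
  induction m using Nat.strong_induction_on generalizing a with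
  | _ m ih =>
  cases m with
  | zero => rw [treeOfNested_zero, numNodes]
  | succ m =>
    obtain ⟨h1, h2, -⟩ := h a le_rfl (by omega)
    rw [treeOfNested_succ, min_eq_left (by omega), numNodes, ih _ (by omega) h.left,
      ih _ (by omega) h.right]
    omega

theorem treeOfNested_eq_of_eqOn (t : BinaryTree Unit) {f : ℕ → ℕ} {a : ℕ}
    (hf : EqOn f (nestedOfTree a t) (Ico a (a + t.numNodes))) :
    treeOfNested f a t.numNodes = t := by
  induction t generalizing a with
  | nil => exact treeOfNested_zero f a
  | node v l r ihl ihr =>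
    rw [numNodes] at hf ⊢
    have hfa : f a = a + l.numNodes := by
      rw [hf ⟨le_rfl, by omega⟩, nestedOfTree_node_self]
    rw [treeOfNested_succ, hfa, show a + l.numNodes - a = l.numNodes by omega,
      min_eq_left (by omega), Nat.add_sub_cancel_left]
    congr
    · exact ihl fun i hi =>
        (hf ⟨by grind, by grind⟩).trans (nestedOfTree_node_of_le (by grind) (by grind))
    · exact ihr fun i hi => (hf ⟨by grind, by grind⟩).trans (nestedOfTree_node_of_lt (by grind))

theorem nestedOfTree_treeOfNested {f : ℕ → ℕ} {a m : ℕ} (h : IsNestedOn a m f) :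
    EqOn (nestedOfTree a (treeOfNested f a m)) f (Ico a (a + m)) := by
  induction m using Nat.strong_induction_on generalizing a with
  | _ m ih =>
  cases m with
  | zero => intro i hi; simp at hi
  | succ m =>
    intro i ⟨hi1, hi2⟩
    obtain ⟨h1, h2, -⟩ := h a le_rfl (by omega)
    have hl := numNodes_treeOfNested h.left
    rw [treeOfNested_succ, min_eq_left (by omega)]
    rcases Nat.lt_trichotomy i a with hia | rfl | hai
    · omega
    · rw [nestedOfTree_node_self, hl]; omega
    by_cases hil : i ≤ f a
    · rw [nestedOfTree_node_of_le hai.ne' (by omega)]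
      exact ih _ (by omega) h.left ⟨by omega, by omega⟩
    · rw [nestedOfTree_node_of_lt (by omega), hl, show a + (f a - a) + 1 = f a + 1 by omega]
      exact ih _ (by omega) h.right ⟨by omega, by omega⟩

noncomputable def maxRel (n : ℕ) (R : ℕ → ℕ → Prop) (a : ℕ) : ℕ :=
  if a ≤ n then sSup {b | R a b} else a

def relOfFun (n : ℕ) (f : ℕ → ℕ) (a b : ℕ) : Prop :=
  a ≤ n ∧ a ≤ b ∧ b ≤ f a

theorem maxRel_of_lt {n a : ℕ} {R : ℕ → ℕ → Prop} (h : n < a) : maxRel n R a = a :=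
  if_neg h.not_ge

namespace IsTransferSystem

variable {n a b : ℕ} {R : ℕ → ℕ → Prop} (hR : IsTransferSystem n R)
include hR

theorem isGreatest_maxRel (ha : a ≤ n) : IsGreatest {b | R a b} (maxRel n R a) := by
  have hbdd : BddAbove {b | R a b} := ⟨n, fun b hb => (hR.1 a b hb).2⟩
  rw [maxRel, if_pos ha]
  exact ⟨Nat.sSup_mem ⟨a, hR.2.1 a ha⟩ hbdd, fun b hb => le_csSup hbdd hb⟩

theorem rel_iff : R a b ↔ relOfFun n (maxRel n R) a b := by
  constructor
  · intro hab
    obtain ⟨hab', hb⟩ := hR.1 a b hab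
    exact ⟨hab'.trans hb, hab', (hR.isGreatest_maxRel (hab'.trans hb)).2 hab⟩
  · rintro ⟨ha, hab, hb⟩
    simpa [min_eq_left hab] using hR.2.2.2 a _ b (hR.isGreatest_maxRel ha).1 hb

theorem isNestedOn_maxRel : IsNestedOn 0 (n + 1) (maxRel n R) := by
  intro i _ hin
  have hi : i ≤ n := by omega
  have ⟨hmax, hgreat⟩ := hR.isGreatest_maxRel hi
  have hmax_le : maxRel n R i ≤ n := (hR.1 _ _ hmax).2
  refine ⟨hgreat (hR.2.1 i hi), by omega, fun j hij hj => ?_⟩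
  have hj' : j ≤ n := hj.trans hmax_le
  exact hgreat (hR.2.2.1 i j _ (hR.rel_iff.2 ⟨hi, hij, hj⟩) (hR.isGreatest_maxRel hj').1)

end IsTransferSystem

section RelOfFun

variable {n : ℕ} {f : ℕ → ℕ} (hf : IsNestedOn 0 (n + 1) f)
include hf

theorem isTransferSystem_relOfFun : IsTransferSystem n (relOfFun n f) := by
  have hf' : ∀ a ≤ n, a ≤ f a ∧ f a ≤ n ∧ ∀ j, a ≤ j → j ≤ f a → f j ≤ f a := fun a ha => by
    obtain ⟨h1, h2, h3⟩ := hf a (Nat.zero_le a) (by omega)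
    exact ⟨h1, by omega, h3⟩
  refine ⟨?_, ?_, ?_, ?_⟩
  · rintro a b ⟨ha, hab, hb⟩
    exact ⟨hab, hb.trans (hf' a ha).2.1⟩
  · intro a ha
    exact ⟨ha, le_rfl, (hf' a ha).1⟩
  · rintro a b c ⟨ha, hab, hb⟩ ⟨-, hbc, hc⟩
    exact ⟨ha, hab.trans hbc, hc.trans ((hf' a ha).2.2 b hab hb)⟩
  · rintro k h m ⟨hk, hkh, hh⟩ hm
    rcases le_total k m with hkm | hmk
    · rw [min_eq_left hkm]
      exact ⟨hk, hkm, hm.trans hh⟩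
    · rw [min_eq_right hmk]
      exact ⟨hmk.trans hk, le_rfl, (hf' m (hmk.trans hk)).1⟩

theorem maxRel_relOfFun {a : ℕ} (ha : a ≤ n) : maxRel n (relOfFun n f) a = f a :=
  ((isTransferSystem_relOfFun hf).isGreatest_maxRel ha).unique
    ⟨⟨ha, (hf a (Nat.zero_le a) (by omega)).1, le_rfl⟩, fun _ hb => hb.2.2⟩

end RelOfFun

noncomputable def transferSystemEquivNested (n : ℕ) :
    {R : ℕ → ℕ → Prop // IsTransferSystem n R} ≃
      {f : ℕ → ℕ // IsNestedOn 0 (n + 1) f ∧ ∀ i, n < i → f i = i} where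
  toFun R := ⟨maxRel n R, R.2.isNestedOn_maxRel, fun _ => maxRel_of_lt⟩
  invFun f := ⟨relOfFun n f, isTransferSystem_relOfFun f.2.1⟩
  left_inv R := Subtype.ext <| funext₂ fun _ _ => propext R.2.rel_iff.symm
  right_inv f := Subtype.ext <| funext fun a => by
    change maxRel n (relOfFun n f.1) a = f.1 a
    rcases le_or_gt a n with ha | ha
    · exact maxRel_relOfFun f.2.1 ha
    · rw [maxRel_of_lt ha, f.2.2 a ha]

noncomputable def nestedEquivTree (n : ℕ) :
    {f : ℕ → ℕ // IsNestedOn 0 (n + 1) f ∧ ∀ i, n < i → f i = i} ≃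
      {t : BinaryTree Unit // t.numNodes = n + 1} where
  toFun f := ⟨treeOfNested f.1 0 (n + 1), numNodes_treeOfNested f.2.1⟩
  invFun t := ⟨nestedOfTree 0 t, by simpa only [t.2] using isNestedOn_nestedOfTree t.1 0,
    fun _ hi => nestedOfTree_of_notMem t (by simp [t.2]; omega)⟩
  left_inv f := Subtype.ext <| funext fun i => by
    change nestedOfTree 0 (treeOfNested f.1 0 (n + 1)) i = f.1 i
    rcases le_or_gt i n with hi | hi
    · exact nestedOfTree_treeOfNested f.2.1 ⟨Nat.zero_le i, by omega⟩
    · rw [f.2.2 i hi, nestedOfTree_of_notMem _ (by simp [numNodes_treeOfNested f.2.1]; omega)]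
  right_inv t := Subtype.ext <| by
    simpa [t.2] using treeOfNested_eq_of_eqOn t.1 (a := 0) (fun _ _ => rfl)

theorem natCard_numNodes_eq_catalan (m : ℕ) :
    Nat.card {t : BinaryTree Unit // t.numNodes = m} = catalan m := by
  rw [← treesOfNumNodesEq_card_eq_catalan, ← Nat.card_eq_finsetCard]
  exact Nat.card_congr (Equiv.subtypeEquivRight fun _ => mem_treesOfNumNodesEq.symm)

theorem catalan_eq_factorial_div (m : ℕ) :
    catalan m = (2 * m).factorial / ((m + 1).factorial * m.factorial) := by
  rw [catalan_eq_centralBinom_div, Nat.centralBinom_eq_two_mul_choose,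
    Nat.choose_eq_factorial_div_factorial (by omega), Nat.div_div_eq_div_mul,
    Nat.factorial_succ, two_mul, Nat.add_sub_cancel]
  ring_nf

theorem num_transfer_systems_eq_catalan (n : ℕ) :
    Nat.card {R : ℕ → ℕ → Prop // IsTransferSystem n R} =
      Nat.factorial (2 * (n + 1)) /
        (Nat.factorial (n + 2) * Nat.factorial (n + 1)) := by
  rw [Nat.card_congr ((transferSystemEquivNested n).trans (nestedEquivTree n)),
    natCard_numNodes_eq_catalan, catalan_eq_factorial_div]
end

section
/- Let T(n) denote the number of transfer systems on the chain {0 < 1 < ... < n}, with the convention T(-1) = 1 (equivalently, define S(n) = T(n-1) with S(0)=1). Then the numbers S satisfy the Catalan recurrence: S(n+1) = Σ_{i=0}^{n} S(i) · S(n-i) for all n ≥ 0. -/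
/-- Transfer system on a chain with `k` elements `{0,...,k-1}`. -/
def ETS (k : ℕ) (R : ℕ → ℕ → Prop) : Prop :=
  (∀ a b, R a b → a ≤ b ∧ b < k) ∧
  (∀ a, a < k → R a a) ∧
  (∀ a b c, R a b → R b c → R a c) ∧
  (∀ p q m, R p q → m ≤ q → R (min p m) m)

abbrev E (k : ℕ) := {R : ℕ → ℕ → Prop // ETS k R}

lemma ETS_succ (n : ℕ) (R : ℕ → ℕ → Prop) : ETS (n+1) R ↔ IsTransferSystem n R := by
  unfold ETS IsTransferSystem
  constructor <;> rintro ⟨h1, h2, h3, h4⟩ <;>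
    exact ⟨fun a b h => ⟨(h1 a b h).1, by have := (h1 a b h).2; omega⟩,
      fun a h => h2 a (by omega), h3, h4⟩

instance Efinite (k : ℕ) : Finite (E k) := by
  have : Function.Injective (fun (R : E k) => fun (a b : Fin k) => R.1 a b) := by
    rintro ⟨R, hR⟩ ⟨R', hR'⟩ h
    ext a b
    constructor
    · intro hab
      obtain ⟨h1, h2⟩ := hR.1 a b hab
      exact (iff_of_eq (congrFun (congrFun h ⟨a, by omega⟩) ⟨b, h2⟩)).mp hab
    · intro hab
      obtain ⟨h1, h2⟩ := hR'.1 a b hab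
      exact (iff_of_eq (congrFun (congrFun h ⟨a, by omega⟩) ⟨b, h2⟩)).mpr hab
  exact Finite.of_injective _ this

lemma card_E_zero : Nat.card (E 0) = 1 := by
  have h : ∀ R : E 0, R.1 = fun _ _ => False := by
    rintro ⟨R, hR⟩
    funext a b
    simp only [eq_iff_iff, iff_false]
    intro hab
    exact absurd (hR.1 a b hab).2 (by omega)
  have : Nonempty (E 0) := ⟨⟨fun _ _ => False, ⟨fun a b h => h.elim, fun a h => by omega,
    fun a b c h => h.elim, fun p q m h => h.elim⟩⟩⟩
  have : Subsingleton (E 0) := ⟨fun R R' => Subtype.ext ((h R).trans (h R').symm)⟩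
  exact Nat.card_eq_one_iff_unique.2 ⟨‹_›, ‹_›⟩

/-- Glue a transfer system on `{0..i-1}`, the forced row at `i`, and a
transfer system on `{i+1..n}` (shifted) into one relation on `{0..n}`. -/
def mkRel (n i : ℕ) (L H : ℕ → ℕ → Prop) : ℕ → ℕ → Prop := fun a b =>
  L a b ∨ (a = i ∧ i ≤ b ∧ b ≤ n) ∨ (i < a ∧ i < b ∧ H (a - (i+1)) (b - (i+1)))

section mk
variable {n i : ℕ} {L H : ℕ → ℕ → Prop}

lemma mk_ETS (hi : i ≤ n) (hL : ETS i L) (hH : ETS (n - i) H) :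
    ETS (n + 1) (mkRel n i L H) := by
  obtain ⟨Ls, Lr, Lt, Lres⟩ := hL
  obtain ⟨Hs, Hr, Ht, Hres⟩ := hH
  refine ⟨?_, ?_, ?_, ?_⟩
  · rintro a b (h | ⟨rfl, h1, h2⟩ | ⟨h1, h2, h3⟩)
    · obtain ⟨u, v⟩ := Ls a b h; omega
    · omega
    · obtain ⟨u, v⟩ := Hs _ _ h3; omega
  · intro a ha
    rcases lt_trichotomy a i with h | rfl | h
    · exact Or.inl (Lr a h)
    · exact Or.inr (Or.inl ⟨rfl, le_refl _, hi⟩)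
    · exact Or.inr (Or.inr ⟨h, h, Hr _ (by omega)⟩)
  · rintro a b c (hab | ⟨rfl, h1, h2⟩ | ⟨h1, h2, h3⟩) (hbc | ⟨rfl, g1, g2⟩ | ⟨g1, g2, g3⟩)
    · exact Or.inl (Lt _ _ _ hab hbc)
    · obtain ⟨u, v⟩ := Ls _ _ hab; omega
    · obtain ⟨u, v⟩ := Ls _ _ hab; omega
    · obtain ⟨u, v⟩ := Ls _ _ hbc; omega
    · exact Or.inr (Or.inl ⟨rfl, by omega, g2⟩)
    · obtain ⟨u, v⟩ := Hs _ _ g3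
      exact Or.inr (Or.inl ⟨rfl, by omega, by omega⟩)
    · obtain ⟨u, v⟩ := Ls _ _ hbc; omega
    · omega
    · refine Or.inr (Or.inr ⟨h1, g2, Ht _ _ _ h3 ?_⟩)
      have : b - (i+1) = b - (i+1) := rfl
      exact g3
  · rintro p q m (h | ⟨he, h1, h2⟩ | ⟨h1, h2, h3⟩) hm
    · obtain ⟨u, v⟩ := Ls _ _ h
      exact Or.inl (Lres _ _ _ h hm)
    · rcases lt_or_ge m i with hmi | hmi
      · have : min p m = m := by omega
        rw [this]; exact Or.inl (Lr m hmi)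
      · have : min p m = i := by omega
        rw [this]; exact Or.inr (Or.inl ⟨rfl, hmi, le_trans hm h2⟩)
    · rcases lt_or_ge i m with hmi | hmi
      · have hmin : min p m = min (p - (i+1)) (m - (i+1)) + (i+1) := by omega
        have h' := Hres _ _ (m - (i+1)) h3 (by omega)
        refine Or.inr (Or.inr ⟨by omega, hmi, ?_⟩)
        rw [hmin]; simpa using h'
      · rcases eq_or_lt_of_le hmi with rfl | hmi'
        · have : min p m = m := by omega
          rw [this]
          obtain ⟨u, v⟩ := Hs _ _ h3
          exact Or.inr (Or.inl ⟨rfl, le_refl _, hi⟩)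
        · have : min p m = m := by omega
          rw [this]; exact Or.inl (Lr m hmi')

lemma mk_rel_top (hi : i ≤ n) : mkRel n i L H i n := Or.inr (Or.inl ⟨rfl, hi, le_refl _⟩)

lemma mk_not_rel_top (hi : i ≤ n) (hL : ETS i L) {a : ℕ} (ha : a < i) : ¬ mkRel n i L H a n := by
  rintro (h | ⟨he, h1, h2⟩ | ⟨h1, h2, h3⟩)
  · obtain ⟨u, v⟩ := hL.1 _ _ h; omega
  · omega
  · omega

lemma mk_low (hL : ETS i L) {a b : ℕ} (hb : b < i) : mkRel n i L H a b ↔ L a b := by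
  constructor
  · rintro (h | ⟨he, h1, h2⟩ | ⟨h1, h2, h3⟩)
    · exact h
    · omega
    · omega
  · exact Or.inl

lemma mk_high (hi : i ≤ n) (hL : ETS i L) (hH : ETS (n - i) H) {a b : ℕ} :
    mkRel n i L H (a + (i+1)) (b + (i+1)) ∧ b + (i+1) ≤ n ↔ H a b := by
  constructor
  · rintro ⟨h | ⟨he, h1, h2⟩ | ⟨h1, h2, h3⟩, hb⟩
    · obtain ⟨u, v⟩ := hL.1 _ _ h; omega
    · omega
    · simpa using h3
  · intro h
    obtain ⟨u, v⟩ := hH.1 _ _ h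
    exact ⟨Or.inr (Or.inr ⟨by omega, by omega, by simpa using h⟩), by omega⟩

end mk

section dec
variable {n : ℕ} {R : ℕ → ℕ → Prop}

/-- The least element related to the top `n`. -/
noncomputable def idxOf (n : ℕ) (R : ℕ → ℕ → Prop) : ℕ := sInf {a | R a n}

lemma idx_spec (hR : ETS (n+1) R) : R (idxOf n R) n :=
  Nat.sInf_mem (s := {a | R a n}) ⟨n, hR.2.1 n (by omega)⟩

lemma idx_le (hR : ETS (n+1) R) : idxOf n R ≤ n :=
  Nat.sInf_le (s := {a | R a n}) (hR.2.1 n (by omega))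

lemma idx_min {a : ℕ} (ha : a < idxOf n R) : ¬ R a n := fun h =>
  Nat.notMem_of_lt_sInf (s := {a | R a n}) ha h

lemma idx_cross (hR : ETS (n+1) R) {a b : ℕ} (h : R a b) (hb : idxOf n R ≤ b) :
    idxOf n R ≤ a := by
  by_contra hlt
  push_neg at hlt
  have h1 := hR.2.2.2 a b (idxOf n R) h hb
  have hmin : min a (idxOf n R) = a := by omega
  rw [hmin] at h1
  exact idx_min hlt (hR.2.2.1 _ _ _ h1 (idx_spec hR))

lemma idx_row (hR : ETS (n+1) R) {m : ℕ} (h1 : idxOf n R ≤ m) (h2 : m ≤ n) :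
    R (idxOf n R) m := by
  have h := hR.2.2.2 _ _ m (idx_spec hR) h2
  rwa [min_eq_left h1] at h

def lowOf (n : ℕ) (R : ℕ → ℕ → Prop) : ℕ → ℕ → Prop :=
  fun a b => R a b ∧ b < idxOf n R

def highOf (n : ℕ) (R : ℕ → ℕ → Prop) : ℕ → ℕ → Prop :=
  fun a b => R (a + (idxOf n R + 1)) (b + (idxOf n R + 1)) ∧ b + (idxOf n R + 1) ≤ n

lemma low_ETS (hR : ETS (n+1) R) : ETS (idxOf n R) (lowOf n R) := by
  have hi := idx_le hR
  refine ⟨?_, ?_, ?_, ?_⟩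
  · rintro a b ⟨h, hb⟩; exact ⟨(hR.1 a b h).1, hb⟩
  · intro a ha; exact ⟨hR.2.1 a (by omega), ha⟩
  · rintro a b c ⟨h1, _⟩ ⟨h2, hc⟩; exact ⟨hR.2.2.1 _ _ _ h1 h2, hc⟩
  · rintro p q m ⟨h, hq⟩ hm; exact ⟨hR.2.2.2 _ _ m h hm, by omega⟩

lemma high_ETS (hR : ETS (n+1) R) : ETS (n - idxOf n R) (highOf n R) := by
  have hi := idx_le hR
  refine ⟨?_, ?_, ?_, ?_⟩
  · rintro a b ⟨h, hb⟩
    have := (hR.1 _ _ h).1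
    constructor <;> omega
  · intro a ha; exact ⟨hR.2.1 _ (by omega), by omega⟩
  · rintro a b c ⟨h1, _⟩ ⟨h2, hc⟩; exact ⟨hR.2.2.1 _ _ _ h1 h2, hc⟩
  · rintro p q m ⟨h, hq⟩ hm
    have h1 := hR.2.2.2 _ _ (m + (idxOf n R + 1)) h (by omega)
    have hmin : min (p + (idxOf n R + 1)) (m + (idxOf n R + 1))
        = min p m + (idxOf n R + 1) := by omega
    rw [hmin] at h1
    exact ⟨h1, by omega⟩

lemma recon (hR : ETS (n+1) R) : mkRel n (idxOf n R) (lowOf n R) (highOf n R) = R := by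
  have hi := idx_le hR
  funext a b
  apply propext
  constructor
  · rintro (⟨h, _⟩ | ⟨he, h1, h2⟩ | ⟨h1, h2, h3, h4⟩)
    · exact h
    · exact he ▸ idx_row hR h1 h2
    · have e1 : a - (idxOf n R + 1) + (idxOf n R + 1) = a := by omega
      have e2 : b - (idxOf n R + 1) + (idxOf n R + 1) = b := by omega
      rwa [e1, e2] at h3
  · intro h
    obtain ⟨hab, hbn⟩ := hR.1 _ _ h
    rcases lt_or_ge b (idxOf n R) with hb | hb
    · exact Or.inl ⟨h, hb⟩
    · have ha := idx_cross hR h hb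
      rcases eq_or_lt_of_le ha with he | hlt
      · exact Or.inr (Or.inl ⟨he.symm, hb, by omega⟩)
      · refine Or.inr (Or.inr ⟨hlt, by omega, ?_, by omega⟩)
        have e1 : a - (idxOf n R + 1) + (idxOf n R + 1) = a := by omega
        have e2 : b - (idxOf n R + 1) + (idxOf n R + 1) = b := by omega
        rw [e1, e2]
        exact h

end dec

/-- The inverse of the Catalan decomposition. -/
def back (n : ℕ) : (Σ i : Fin (n+1), E i.val × E (n - i.val)) → E (n+1) :=
  fun x => ⟨mkRel n x.1.val x.2.1.1 x.2.2.1,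
    mk_ETS (by omega) x.2.1.2 x.2.2.2⟩

lemma back_bij (n : ℕ) : Function.Bijective (back n) := by
  constructor
  · rintro ⟨⟨i, hilt⟩, ⟨L, hL⟩, ⟨H, hH⟩⟩ ⟨⟨j, hjlt⟩, ⟨L', hL'⟩, ⟨H', hH'⟩⟩ h
    simp only [back, Subtype.mk.injEq] at h
    have hi : i ≤ n := by omega
    have hj : j ≤ n := by omega
    have hij : i = j := by
      rcases lt_trichotomy i j with hlt | he | hlt
      · exact absurd (h ▸ mk_rel_top hi) (mk_not_rel_top hj hL' hlt)
      · exact he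
      · exact absurd (h.symm ▸ mk_rel_top hj) (mk_not_rel_top hi hL hlt)
    subst hij
    have h2 : ∀ a b, mkRel n i L H a b ↔ mkRel n i L' H' a b := fun a b =>
      iff_of_eq (congrFun (congrFun h a) b)
    have hLL : L = L' := by
      funext a b
      apply propext
      constructor
      · intro hab
        have hb := (hL.1 _ _ hab).2
        exact (mk_low hL' hb).mp ((h2 a b).mp (Or.inl hab))
      · intro hab
        have hb := (hL'.1 _ _ hab).2
        exact (mk_low hL hb).mp ((h2 a b).mpr (Or.inl hab))
    have hHH : H = H' := by
      funext a b
      apply propext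
      constructor
      · intro hab
        exact (mk_high hi hL' hH').mp
          ⟨(h2 _ _).mp ((mk_high hi hL hH).mpr hab).1, ((mk_high hi hL hH).mpr hab).2⟩
      · intro hab
        exact (mk_high hi hL hH).mp
          ⟨(h2 _ _).mpr ((mk_high hi hL' hH').mpr hab).1, ((mk_high hi hL' hH').mpr hab).2⟩
    subst hLL; subst hHH
    rfl
  · rintro ⟨R, hR⟩
    refine ⟨⟨⟨idxOf n R, by have := idx_le hR; omega⟩,
      ⟨lowOf n R, low_ETS hR⟩, ⟨highOf n R, high_ETS hR⟩⟩, ?_⟩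
    exact Subtype.ext (recon hR)

lemma card_rec (n : ℕ) : Nat.card (E (n+1)) =
    ∑ i ∈ Finset.range (n+1), Nat.card (E i) * Nat.card (E (n - i)) := by
  classical
  haveI : ∀ k, Fintype (E k) := fun k => Fintype.ofFinite _
  rw [← Nat.card_congr (Equiv.ofBijective _ (back_bij n))]
  rw [Nat.card_eq_fintype_card, Fintype.card_sigma]
  rw [← Fin.sum_univ_eq_sum_range]
  congr 1
  funext i
  rw [Fintype.card_prod, Nat.card_eq_fintype_card, Nat.card_eq_fintype_card]


theorem transfer_systems_catalan_recurrence (S : ℕ → ℕ)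
    (h0 : S 0 = 1)
    (hS : ∀ n : ℕ, S (n + 1) =
      Nat.card {R : ℕ → ℕ → Prop // IsTransferSystem n R}) :
    ∀ n : ℕ, S (n + 1) = ∑ i ∈ Finset.range (n + 1), S i * S (n - i) := by
  have S_eq : ∀ k, S k = Nat.card (E k) := by
    intro k
    cases k with
    | zero => rw [h0, card_E_zero]
    | succ m =>
      rw [hS m]
      exact (Nat.card_congr (Equiv.subtypeEquivRight (fun R => ETS_succ m R))).symm
  intro n
  rw [S_eq (n+1), card_rec n]
  exact Finset.sum_congr rfl fun i _ => by rw [S_eq i, S_eq (n - i)]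
end

section
/- Conversely, if the relation X ⊙ Y on {0,...,i+j+2} (defined as the union of a reflexive relation X contained in the order on {0,...,i}, the shift by i+2 of a reflexive relation Y contained in the order on {0,...,j}, and all pairs (i+1,k) for i+1 < k ≤ i+j+2) is a transfer system, then X is a transfer system on {0,...,i} and Y is a transfer system on {0,...,j}. -/
/-- The relation `X ⊙ Y` on the chain `{0, ..., i+j+2}`: the union of `X`
(on `{0,...,i}`), the shift of `Y` by `i+2`, the pairs `(i+1, k)` for
`i+1 < k ≤ i+j+2`, together with all reflexive pairs. -/
def odot (i j : ℕ) (X Y : ℕ → ℕ → Prop) : ℕ → ℕ → Prop := fun a b =>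
  (X a b) ∨
  (i + 2 ≤ a ∧ b ≤ i + j + 2 ∧ Y (a - (i + 2)) (b - (i + 2))) ∨
  (a = i + 1 ∧ i + 1 < b ∧ b ≤ i + j + 2) ∨
  (a = b ∧ b ≤ i + j + 2)

theorem odot_isTransferSystem_converse (i j : ℕ) (X Y : ℕ → ℕ → Prop)
    (hXsub : ∀ a b, X a b → a ≤ b ∧ b ≤ i) (hXrefl : ∀ a, a ≤ i → X a a)
    (hYsub : ∀ a b, Y a b → a ≤ b ∧ b ≤ j) (hYrefl : ∀ a, a ≤ j → Y a a)
    (h : IsTransferSystem (i + j + 2) (odot i j X Y)) :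
    IsTransferSystem i X ∧ IsTransferSystem j Y := by
  obtain ⟨-, -, htrans, hres⟩ := h
  constructor
  · refine ⟨hXsub, hXrefl, ?_, ?_⟩
    · intro a b c hab hbc
      obtain ⟨hab1, hab2⟩ := hXsub a b hab
      obtain ⟨hbc1, hbc2⟩ := hXsub b c hbc
      have := htrans a b c (Or.inl hab) (Or.inl hbc)
      rcases this with h1 | ⟨h1, _⟩ | ⟨h1, _⟩ | ⟨h1, _⟩
      · exact h1
      · omega
      · omega
      · rw [h1]; exact hXrefl c hbc2
    · intro k m n hkm hnm
      obtain ⟨h1, h2⟩ := hXsub k m hkm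
      have := hres k m n (Or.inl hkm) hnm
      rcases this with h1 | ⟨h1, _⟩ | ⟨h1, _⟩ | ⟨h1, _⟩
      · exact h1
      · simp only [min_def] at h1; split at h1 <;> omega
      · simp only [min_def] at h1; split at h1 <;> omega
      · rw [h1]; exact hXrefl n (by omega)
  · have emb : ∀ a b, Y a b → odot i j X Y (a + (i + 2)) (b + (i + 2)) := by
      intro a b hab
      obtain ⟨h1, h2⟩ := hYsub a b hab
      exact Or.inr (Or.inl ⟨by omega, by omega, by simpa using hab⟩)
    have ext : ∀ a b, a ≤ j → b ≤ j → odot i j X Y (a + (i + 2)) (b + (i + 2)) → Y a b := by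
      intro a b ha hb hab
      rcases hab with h1 | ⟨_, _, h1⟩ | ⟨h1, _⟩ | ⟨h1, _⟩
      · have := hXsub _ _ h1; omega
      · simpa using h1
      · omega
      · have : a = b := by omega
        subst this; exact hYrefl a ha
    refine ⟨hYsub, hYrefl, ?_, ?_⟩
    · intro a b c hab hbc
      obtain ⟨hab1, hab2⟩ := hYsub a b hab
      obtain ⟨hbc1, hbc2⟩ := hYsub b c hbc
      exact ext a c (by omega) hbc2 (htrans _ _ _ (emb a b hab) (emb b c hbc))
    · intro k m n hkm hnm
      obtain ⟨h1, h2⟩ := hYsub k m hkm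
      have := hres (k + (i + 2)) (m + (i + 2)) (n + (i + 2)) (emb k m hkm) (by omega)
      have hmin : min (k + (i + 2)) (n + (i + 2)) = min k n + (i + 2) := by
        simp only [min_def]; split <;> split <;> omega
      rw [hmin] at this
      exact ext (min k n) n (by omega) (by omega) this
end

section
/- For every natural number n there is a bijection between the set of transfer systems on the chain {0,...,n} and the set of rooted binary trees with n+2 leaves. -/
/-- Rooted binary trees: a single leaf, or an ordered pair of subtrees. -/
inductive BTree where
  | leaf : BTree
  | node : BTree → BTree → BTree

/-- The number of leaves of a rooted binary tree. -/
def BTree.leaves : BTree → ℕ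
  | .leaf => 1
  | .node l r => l.leaves + r.leaves

/-! ### Auxiliary development -/

lemma BTree.one_le_leaves (t : BTree) : 1 ≤ t.leaves := by
  induction t with
  | leaf => simp [BTree.leaves]
  | node l r ihl ihr => simp only [BTree.leaves]; omega

lemma BTree.eq_leaf_of_leaves_eq_one {t : BTree} (h : t.leaves = 1) : t = .leaf := by
  cases t with
  | leaf => rfl
  | node l r =>
    exfalso
    have := l.one_le_leaves
    have := r.one_le_leaves
    simp only [BTree.leaves] at h
    omega

/-- "Nesting functions" on `{0, ..., s-1}` (padded by `0` outside): `a ≤ g a < s`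
on the range, and the intervals `[a, g a]` are nested. -/
def GFun (s : ℕ) : Type :=
  {g : ℕ → ℕ // (∀ a, a < s → a ≤ g a ∧ g a < s) ∧
    (∀ a b, a < s → a ≤ b → b ≤ g a → g b ≤ g a) ∧
    (∀ a, s ≤ a → g a = 0)}

/-- Transfer systems on the chain `{0,...,n}` are the same as nesting functions
on `{0,...,n}`. -/
lemma findGreatest_eq_of {P : ℕ → Prop} {inst : DecidablePred P} {n m : ℕ} (hm : m ≤ n)
    (hPm : P m) (hmax : ∀ b, P b → b ≤ m) : @Nat.findGreatest P inst n = m := by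
  letI := inst
  exact le_antisymm (hmax _ (Nat.findGreatest_spec hm hPm)) (Nat.le_findGreatest hm hPm)

noncomputable def tsEquivGFun (n : ℕ) :
    {R : ℕ → ℕ → Prop // IsTransferSystem n R} ≃ GFun (n + 1) := by
  classical
  refine
    { toFun := fun R => ⟨fun a => if a ≤ n then Nat.findGreatest (R.1 a) n else 0, ?_, ?_, ?_⟩
      invFun := fun g => ⟨fun a b => a ≤ b ∧ b ≤ g.1 a ∧ a ≤ n, ?_, ?_, ?_, ?_⟩
      left_inv := ?_
      right_inv := ?_ }
  · -- a ≤ g a < n+1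
    rintro a ha
    obtain ⟨R, h1, h2, h3, h4⟩ := R
    have ha' : a ≤ n := by omega
    simp only [if_pos ha']
    exact ⟨Nat.le_findGreatest ha' (h2 a ha'), by
      have := Nat.findGreatest_le (P := R a) n; omega⟩
  · -- nesting
    rintro a b ha hab hb
    obtain ⟨R, h1, h2, h3, h4⟩ := R
    have ha' : a ≤ n := by omega
    simp only [if_pos ha'] at hb ⊢
    have hb' : b ≤ n := le_trans hb (Nat.findGreatest_le n)
    simp only [if_pos hb']
    -- R a (findGreatest (R a) n)
    have hRa : R a (Nat.findGreatest (R a) n) := Nat.findGreatest_spec ha' (h2 a ha')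
    have hRab : R a b := by
      have := h4 a (Nat.findGreatest (R a) n) b hRa hb
      rwa [min_eq_left hab] at this
    have hRb : R b (Nat.findGreatest (R b) n) := Nat.findGreatest_spec hb' (h2 b hb')
    exact Nat.le_findGreatest (Nat.findGreatest_le n) (h3 a b _ hRab hRb)
  · rintro a ha
    simp only [if_neg (show ¬ a ≤ n by omega)]
  · -- bounds
    rintro a b ⟨hab, hbg, han⟩
    refine ⟨hab, ?_⟩
    have := (g.2.1 a (by omega)).2
    omega
  · -- refl
    rintro a ha
    exact ⟨le_refl a, (g.2.1 a (by omega)).1, ha⟩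
  · -- trans
    rintro a b c ⟨hab, hbg, han⟩ ⟨hbc, hcg, hbn⟩
    have := g.2.2.1 a b (by omega) hab hbg
    exact ⟨le_trans hab hbc, by omega, han⟩
  · -- restriction
    rintro k h m ⟨hkh, hhg, hkn⟩ hmh
    have hgk : g.1 k ≤ n := by have := (g.2.1 k (by omega)).2; omega
    have hmn : m ≤ n := by omega
    rcases le_total m k with hmk | hkm
    · rw [min_eq_right hmk]
      exact ⟨le_refl m, (g.2.1 m (by omega)).1, hmn⟩
    · rw [min_eq_left hkm]
      exact ⟨hkm, by omega, hkn⟩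
  · -- left_inv
    rintro ⟨R, h1, h2, h3, h4⟩
    apply Subtype.ext
    funext a b
    apply propext
    constructor
    · rintro ⟨hab, hbg, han⟩
      simp only [if_pos han] at hbg
      have hRa : R a (Nat.findGreatest (R a) n) := Nat.findGreatest_spec han (h2 a han)
      have := h4 a (Nat.findGreatest (R a) n) b hRa hbg
      rwa [min_eq_left hab] at this
    · intro hRab
      obtain ⟨hab, hbn⟩ := h1 a b hRab
      have han : a ≤ n := le_trans hab hbn
      exact ⟨hab, by simp only [if_pos han]; exact Nat.le_findGreatest hbn hRab, han⟩
  · -- right_inv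
    rintro ⟨g, hg1, hg2, hg3⟩
    apply Subtype.ext
    funext a
    by_cases han : a ≤ n
    · simp only [if_pos han]
      have hga : g a ≤ n := by have := (hg1 a (by omega)).2; omega
      have haga : a ≤ g a := (hg1 a (by omega)).1
      exact findGreatest_eq_of hga ⟨haga, le_refl _, han⟩ (fun b hb => hb.2.1)
    · simp only [if_neg han]
      exact (hg3 a (by omega)).symm

/-- The underlying glued function. -/
def glueFun (s k : ℕ) (g1 g2 : ℕ → ℕ) : ℕ → ℕ := fun a =>
  if a = 0 then k else if a ≤ k then g1 (a - 1) + 1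
    else if a ≤ s then g2 (a - k - 1) + (k + 1) else 0

lemma glueFun_mem (s k : ℕ) (hk : k < s + 1) (g1 : GFun k) (g2 : GFun (s - k)) :
    (∀ a, a < s + 1 → a ≤ glueFun s k g1.1 g2.1 a ∧ glueFun s k g1.1 g2.1 a < s + 1) ∧
    (∀ a b, a < s + 1 → a ≤ b → b ≤ glueFun s k g1.1 g2.1 a →
      glueFun s k g1.1 g2.1 b ≤ glueFun s k g1.1 g2.1 a) ∧
    (∀ a, s + 1 ≤ a → glueFun s k g1.1 g2.1 a = 0) := by
  obtain ⟨a1, p11, p12, p13⟩ := g1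
  obtain ⟨a2, p21, p22, p23⟩ := g2
  refine ⟨?_, ?_, ?_⟩
  · intro a ha
    rcases Nat.eq_zero_or_pos a with h0 | h0
    · subst h0
      exact ⟨Nat.zero_le _, hk⟩
    · by_cases hak : a ≤ k
      · have h := p11 (a - 1) (by omega)
        simp only [glueFun, if_neg (by omega : ¬ a = 0), if_pos hak]
        omega
      · have h := p21 (a - k - 1) (by omega)
        simp only [glueFun, if_neg (by omega : ¬ a = 0), if_neg hak,
          if_pos (by omega : a ≤ s)]
        omega
  · intro a b ha hab hb
    rcases Nat.eq_zero_or_pos a with h0 | h0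
    · subst h0
      have hb' : b ≤ k := hb
      show glueFun s k a1 a2 b ≤ k
      rcases Nat.eq_zero_or_pos b with hb0 | hb0
      · subst hb0; exact le_refl k
      · have h := p11 (b - 1) (by omega)
        simp only [glueFun, if_neg (by omega : ¬ b = 0), if_pos (by omega : b ≤ k)]
        omega
    · by_cases hak : a ≤ k
      · have ha' := p11 (a - 1) (by omega)
        simp only [glueFun, if_neg (by omega : ¬ a = 0), if_pos hak] at hb ⊢
        have hbk : b ≤ k := by omega
        have hb0 : 0 < b := by omega
        have h := p12 (a - 1) (b - 1) (by omega) (by omega) (by omega)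
        simp only [glueFun, if_neg (by omega : ¬ b = 0), if_pos hbk]
        omega
      · have ha' := p21 (a - k - 1) (by omega)
        simp only [glueFun, if_neg (by omega : ¬ a = 0), if_neg hak,
          if_pos (by omega : a ≤ s)] at hb ⊢
        have hbk : ¬ b ≤ k := by omega
        have hbs : b ≤ s := by omega
        have h := p22 (a - k - 1) (b - k - 1) (by omega) (by omega) (by omega)
        simp only [glueFun, if_neg (by omega : ¬ b = 0), if_neg hbk, if_pos hbs]
        omega
  · intro a ha
    simp only [glueFun, if_neg (by omega : ¬ a = 0), if_neg (by omega : ¬ a ≤ k),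
      if_neg (by omega : ¬ a ≤ s)]

/-- Gluing a nesting function on `{0,...,k-1}` and one on `{0,...,s-k-1}` into
one on `{0,...,s}`, with `g 0 = k`. -/
def glueG (s : ℕ) : (Σ k : Fin (s + 1), GFun k × GFun (s - k)) → GFun (s + 1) :=
  fun x => ⟨glueFun s x.1 x.2.1.1 x.2.2.1, glueFun_mem s x.1 x.1.2 x.2.1 x.2.2⟩

def splitG1 (k : ℕ) (g : ℕ → ℕ) : ℕ → ℕ := fun a => if a < k then g (a + 1) - 1 else 0

def splitG2 (s k : ℕ) (g : ℕ → ℕ) : ℕ → ℕ :=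
  fun a => if a < s - k then g (a + k + 1) - (k + 1) else 0

lemma glueG_bijective (s : ℕ) : Function.Bijective (glueG s) := by
  constructor
  · rintro ⟨⟨k, hk⟩, ⟨a1, pa⟩, ⟨a2, qa⟩⟩ ⟨⟨k', hk'⟩, ⟨b1, pb⟩, ⟨b2, qb⟩⟩ h
    have hf : ∀ a, glueFun s k a1 a2 a = glueFun s k' b1 b2 a :=
      fun a => congrFun (congrArg Subtype.val h) a
    have hk0 : k = k' := by simpa [glueFun] using hf 0
    subst hk0
    have pa2 : ∀ a, k ≤ a → a1 a = 0 := pa.2.2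
    have pb2 : ∀ a, k ≤ a → b1 a = 0 := pb.2.2
    have qa2 : ∀ a, s - k ≤ a → a2 a = 0 := qa.2.2
    have qb2 : ∀ a, s - k ≤ a → b2 a = 0 := qb.2.2
    have hg1 : a1 = b1 := by
      funext a
      rcases lt_or_ge a k with ha | ha
      · have := hf (a + 1)
        simp only [glueFun, if_neg (by omega : ¬ a + 1 = 0),
          if_pos (by omega : a + 1 ≤ k), Nat.add_sub_cancel] at this
        omega
      · rw [pa2 a ha, pb2 a ha]
    have hg2 : a2 = b2 := by
      funext a
      rcases lt_or_ge a (s - k) with ha | ha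
      · have := hf (a + k + 1)
        simp only [glueFun, if_neg (by omega : ¬ a + k + 1 = 0),
          if_neg (by omega : ¬ a + k + 1 ≤ k), if_pos (by omega : a + k + 1 ≤ s)] at this
        rw [show a + k + 1 - k - 1 = a from by omega] at this
        omega
      · rw [qa2 a ha, qb2 a ha]
    subst hg1; subst hg2
    rfl
  · rintro ⟨g, hg1, hg2, hg3⟩
    have hk : g 0 < s + 1 := (hg1 0 (by omega)).2
    have q1 : (∀ a, a < g 0 → a ≤ splitG1 (g 0) g a ∧ splitG1 (g 0) g a < g 0) ∧
        (∀ a b, a < g 0 → a ≤ b → b ≤ splitG1 (g 0) g a →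
          splitG1 (g 0) g b ≤ splitG1 (g 0) g a) ∧
        (∀ a, g 0 ≤ a → splitG1 (g 0) g a = 0) := by
      refine ⟨?_, ?_, ?_⟩
      · intro a ha
        have h1 := hg1 (a + 1) (by omega)
        have h2 := hg2 0 (a + 1) (by omega) (by omega) (by omega)
        simp only [splitG1, if_pos ha]
        omega
      · intro a b ha hab hb
        have h1 := hg1 (a + 1) (by omega)
        have hbd := hg2 0 (a + 1) (by omega) (by omega) (by omega)
        simp only [splitG1, if_pos ha] at hb ⊢
        have hbk : b < g 0 := by omega
        have h := hg2 (a + 1) (b + 1) (by omega) (by omega) (by omega)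
        simp only [splitG1, if_pos hbk]
        omega
      · intro a ha
        simp only [splitG1, if_neg (by omega : ¬ a < g 0)]
    have q2 : (∀ a, a < s - g 0 → a ≤ splitG2 s (g 0) g a ∧ splitG2 s (g 0) g a < s - g 0) ∧
        (∀ a b, a < s - g 0 → a ≤ b → b ≤ splitG2 s (g 0) g a →
          splitG2 s (g 0) g b ≤ splitG2 s (g 0) g a) ∧
        (∀ a, s - g 0 ≤ a → splitG2 s (g 0) g a = 0) := by
      refine ⟨?_, ?_, ?_⟩
      · intro a ha
        have h1 := hg1 (a + g 0 + 1) (by omega)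
        simp only [splitG2, if_pos ha]
        omega
      · intro a b ha hab hb
        have h1 := hg1 (a + g 0 + 1) (by omega)
        simp only [splitG2, if_pos ha] at hb ⊢
        have hbk : b < s - g 0 := by omega
        have h := hg2 (a + g 0 + 1) (b + g 0 + 1) (by omega) (by omega) (by omega)
        simp only [splitG2, if_pos hbk]
        omega
      · intro a ha
        simp only [splitG2, if_neg (by omega : ¬ a < s - g 0)]
    refine ⟨⟨⟨g 0, hk⟩, ⟨splitG1 (g 0) g, q1⟩, ⟨splitG2 s (g 0) g, q2⟩⟩, ?_⟩
    apply Subtype.ext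
    funext a
    show glueFun s (g 0) (splitG1 (g 0) g) (splitG2 s (g 0) g) a = g a
    rcases Nat.eq_zero_or_pos a with h0 | h0
    · subst h0; rfl
    · by_cases hak : a ≤ g 0
      · have h1 := hg1 a (by omega)
        simp only [glueFun, if_neg (by omega : ¬ a = 0), if_pos hak, splitG1,
          if_pos (by omega : a - 1 < g 0)]
        rw [show a - 1 + 1 = a from by omega]
        omega
      · by_cases has : a ≤ s
        · have h1 := hg1 a (by omega)
          simp only [glueFun, if_neg (by omega : ¬ a = 0), if_neg hak, if_pos has, splitG2,
            if_pos (by omega : a - g 0 - 1 < s - g 0)]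
          rw [show a - g 0 - 1 + g 0 + 1 = a from by omega]
          omega
        · simp only [glueFun, if_neg (by omega : ¬ a = 0), if_neg hak, if_neg has]
          exact (hg3 a (by omega)).symm

/-- Gluing two trees into a node. -/
def glueT (s : ℕ) :
    (Σ k : Fin (s + 1), {l : BTree // l.leaves = k + 1} × {r : BTree // r.leaves = (s - k) + 1}) →
      {t : BTree // t.leaves = (s + 1) + 1} :=
  fun x => ⟨.node x.2.1.1 x.2.2.1, by
    have h1 := x.2.1.2
    have h2 := x.2.2.2
    have h3 := x.1.2
    simp only [BTree.leaves, h1, h2]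
    omega⟩

lemma glueT_bijective (s : ℕ) : Function.Bijective (glueT s) := by
  constructor
  · rintro ⟨⟨k, hk⟩, ⟨l, hl⟩, ⟨r, hr⟩⟩ ⟨⟨k', hk'⟩, ⟨l', hl'⟩, ⟨r', hr'⟩⟩ h
    have h' : BTree.node l r = BTree.node l' r' := congrArg Subtype.val h
    injection h' with h1 h2
    subst h1; subst h2
    have hl2 : l.leaves = k + 1 := hl
    have hl2' : l.leaves = k' + 1 := hl'
    have : k = k' := by omega
    subst this
    rfl
  · rintro ⟨t, ht⟩
    cases t with
    | leaf =>
      exfalso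
      have : (1 : ℕ) = s + 2 := ht
      omega
    | node l r =>
      have h1 := l.one_le_leaves
      have h2 := r.one_le_leaves
      have ht' : l.leaves + r.leaves = s + 2 := ht
      refine ⟨⟨⟨l.leaves - 1, by omega⟩, ⟨l, ?_⟩, ⟨r, ?_⟩⟩, Subtype.ext rfl⟩
      · show l.leaves = l.leaves - 1 + 1
        omega
      · show r.leaves = s - (l.leaves - 1) + 1
        omega

theorem gfunEquivTree (s : ℕ) : Nonempty (GFun s ≃ {t : BTree // t.leaves = s + 1}) := by
  induction s using Nat.strong_induction_on with
  | _ s ih =>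
    match s with
    | 0 =>
      refine ⟨{ toFun := fun _ => ⟨.leaf, rfl⟩
                invFun := fun _ => ⟨fun _ => 0, ?_, ?_, ?_⟩
                left_inv := ?_
                right_inv := ?_ }⟩
      · intro a ha; omega
      · intro a b ha; omega
      · intro a _; rfl
      · intro g
        exact Subtype.ext (funext fun a => (g.2.2.2 a (Nat.zero_le a)).symm)
      · intro t
        exact Subtype.ext (BTree.eq_leaf_of_leaves_eq_one t.2).symm
    | s + 1 =>
      exact ⟨(Equiv.ofBijective _ (glueG_bijective s)).symm.trans
        ((Equiv.sigmaCongrRight (fun k : Fin (s + 1) =>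
          Equiv.prodCongr (ih k k.isLt).some (ih (s - k) (by omega)).some)).trans
          (Equiv.ofBijective _ (glueT_bijective s)))⟩

theorem transfer_systems_equiv_binary_trees (n : ℕ) :
    Nonempty ({R : ℕ → ℕ → Prop // IsTransferSystem n R} ≃
      {t : BTree // t.leaves = n + 2}) := by
  obtain ⟨e⟩ := gfunEquivTree (n + 1)
  exact ⟨(tsEquivGFun n).trans e⟩
end

section
/- The number of transfer systems on the 2×2 grid poset {0,1} × {0,1} (the divisor lattice of pq for distinct primes p, q) is exactly 10. -/
/-- A transfer system on the grid poset `{0,...,m} × {0,...,n}` (the product of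
two chains, with componentwise order and componentwise meet): a relation
contained in the partial order, reflexive, transitive, and satisfying
restriction with respect to the meet. -/
def IsTransferSystemGrid (m n : ℕ) (R : ℕ × ℕ → ℕ × ℕ → Prop) : Prop :=
  (∀ a b, R a b → a.1 ≤ b.1 ∧ a.2 ≤ b.2 ∧ b.1 ≤ m ∧ b.2 ≤ n) ∧
  (∀ a : ℕ × ℕ, a.1 ≤ m → a.2 ≤ n → R a a) ∧
  (∀ a b c, R a b → R b c → R a c) ∧
  (∀ k h p : ℕ × ℕ, R k h → p.1 ≤ h.1 → p.2 ≤ h.2 →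
    R (min k.1 p.1, min k.2 p.2) p)


namespace TSAux

def toB (a : ℕ × ℕ) : Bool × Bool := (decide (a.1 = 1), decide (a.2 = 1))
def toN (a : Bool × Bool) : ℕ × ℕ := (cond a.1 1 0, cond a.2 1 0)

def PB (S : Bool × Bool → Bool × Bool → Bool) : Prop :=
  (∀ a b, S a b = true → a.1 ≤ b.1 ∧ a.2 ≤ b.2) ∧
  (∀ a, S a a = true) ∧
  (∀ a b c, S a b = true → S b c = true → S a c = true) ∧
  (∀ k h p, S k h = true → p.1 ≤ h.1 → p.2 ≤ h.2 → S (k.1 && p.1, k.2 && p.2) p = true)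

instance : DecidablePred PB := fun S => by unfold PB; infer_instance

lemma toN_le_one (a : Bool × Bool) : (toN a).1 ≤ 1 ∧ (toN a).2 ≤ 1 := by
  rcases a with ⟨a1, a2⟩; cases a1 <;> cases a2 <;> simp [toN]

lemma toB_toN (a : Bool × Bool) : toB (toN a) = a := by
  rcases a with ⟨a1, a2⟩; cases a1 <;> cases a2 <;> rfl

lemma toN_toB (a : ℕ × ℕ) (h1 : a.1 ≤ 1) (h2 : a.2 ≤ 1) : toN (toB a) = a := by
  rcases a with ⟨x, y⟩
  dsimp at h1 h2
  interval_cases x <;> interval_cases y <;> rfl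

lemma decide_le_decide {x y : ℕ} (hx : x ≤ 1) (hy : y ≤ 1) :
    (decide (x = 1) ≤ decide (y = 1)) ↔ x ≤ y := by
  interval_cases x <;> interval_cases y <;> simp

lemma decide_min {x y : ℕ} (hx : x ≤ 1) (hy : y ≤ 1) :
    decide (min x y = 1) = (decide (x = 1) && decide (y = 1)) := by
  interval_cases x <;> interval_cases y <;> rfl

lemma cond_le_cond (a b : Bool) : ((cond a 1 0 : ℕ) ≤ cond b 1 0) ↔ a ≤ b := by
  cases a <;> cases b <;> simp

lemma min_cond (a b : Bool) : min (cond a 1 0 : ℕ) (cond b 1 0) = cond (a && b) 1 0 := by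
  cases a <;> cases b <;> rfl

/-- Lift a Bool relation on the Bool grid to ℕ × ℕ. -/
def lift (S : Bool × Bool → Bool × Bool → Bool) (a b : ℕ × ℕ) : Prop :=
  a.1 ≤ 1 ∧ a.2 ≤ 1 ∧ b.1 ≤ 1 ∧ b.2 ≤ 1 ∧ S (toB a) (toB b) = true

attribute [local instance] Classical.propDecidable

noncomputable def shrink (R : ℕ × ℕ → ℕ × ℕ → Prop) (a b : Bool × Bool) : Bool :=
  decide (R (toN a) (toN b))

lemma lift_isTS {S} (hS : PB S) : IsTransferSystemGrid 1 1 (lift S) := by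
  obtain ⟨h1, h2, h3, h4⟩ := hS
  refine ⟨?_, ?_, ?_, ?_⟩
  · rintro a b ⟨ha1, ha2, hb1, hb2, hab⟩
    have := h1 _ _ hab
    exact ⟨(decide_le_decide ha1 hb1).1 this.1, (decide_le_decide ha2 hb2).1 this.2,
      hb1, hb2⟩
  · intro a ha1 ha2
    exact ⟨ha1, ha2, ha1, ha2, h2 _⟩
  · rintro a b c ⟨ha1, ha2, hb1, hb2, hab⟩ ⟨_, _, hc1, hc2, hbc⟩
    exact ⟨ha1, ha2, hc1, hc2, h3 _ _ _ hab hbc⟩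
  · rintro k h p ⟨hk1, hk2, hh1, hh2, hkh⟩ hp1 hp2
    have hp1' : p.1 ≤ 1 := le_trans hp1 hh1
    have hp2' : p.2 ≤ 1 := le_trans hp2 hh2
    refine ⟨le_trans (min_le_right _ _) hp1', le_trans (min_le_right _ _) hp2',
      hp1', hp2', ?_⟩
    have := h4 (toB k) (toB h) (toB p) hkh
      ((decide_le_decide hp1' hh1).2 hp1) ((decide_le_decide hp2' hh2).2 hp2)
    have e1 : toB (min k.1 p.1, min k.2 p.2)
        = ((toB k).1 && (toB p).1, (toB k).2 && (toB p).2) := by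
      simp [toB, decide_min hk1 hp1', decide_min hk2 hp2']
    rw [e1]; exact this

lemma shrink_PB {R} (hR : IsTransferSystemGrid 1 1 R) : PB (shrink R) := by
  obtain ⟨h1, h2, h3, h4⟩ := hR
  refine ⟨?_, ?_, ?_, ?_⟩
  · intro a b hab
    have := h1 _ _ (of_decide_eq_true hab)
    exact ⟨(cond_le_cond _ _).1 this.1, (cond_le_cond _ _).1 this.2.1⟩
  · intro a
    exact decide_eq_true (h2 _ (toN_le_one a).1 (toN_le_one a).2)
  · intro a b c hab hbc
    exact decide_eq_true (h3 _ _ _ (of_decide_eq_true hab) (of_decide_eq_true hbc))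
  · intro k h p hkh hp1 hp2
    have := h4 (toN k) (toN h) (toN p) (of_decide_eq_true hkh)
      ((cond_le_cond _ _).2 hp1) ((cond_le_cond _ _).2 hp2)
    apply decide_eq_true
    have e : toN (k.1 && p.1, k.2 && p.2)
        = (min (toN k).1 (toN p).1, min (toN k).2 (toN p).2) := by
      simp [toN, min_cond]
    rw [e]; exact this

lemma lift_shrink {R} (hR : IsTransferSystemGrid 1 1 R) : lift (shrink R) = R := by
  funext a b
  apply propext
  constructor
  · rintro ⟨ha1, ha2, hb1, hb2, hab⟩
    have := of_decide_eq_true hab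
    rwa [toN_toB a ha1 ha2, toN_toB b hb1 hb2] at this
  · intro hab
    have hb := hR.1 a b hab
    have ha1 : a.1 ≤ 1 := le_trans hb.1 hb.2.2.1
    have ha2 : a.2 ≤ 1 := le_trans hb.2.1 hb.2.2.2
    refine ⟨ha1, ha2, hb.2.2.1, hb.2.2.2, decide_eq_true ?_⟩
    rwa [toN_toB a ha1 ha2, toN_toB b hb.2.2.1 hb.2.2.2]

lemma shrink_lift (S : Bool × Bool → Bool × Bool → Bool) : shrink (lift S) = S := by
  funext a b
  simp only [shrink, lift, toB_toN]
  have h1 := toN_le_one a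
  have h2 := toN_le_one b
  simp [h1.1, h1.2, h2.1, h2.2]

/-- The five free values. -/
def mk (v : Bool × Bool × Bool × Bool × Bool) : Bool × Bool → Bool × Bool → Bool :=
  fun a b => match a, b with
  | (false, false), (false, false) => true
  | (false, false), (true, false) => v.1
  | (false, false), (false, true) => v.2.1
  | (false, false), (true, true) => v.2.2.1
  | (true, false), (true, false) => true
  | (true, false), (true, true) => v.2.2.2.1
  | (false, true), (false, true) => true
  | (false, true), (true, true) => v.2.2.2.2
  | (true, true), (true, true) => true
  | _, _ => false

def ext (S : Bool × Bool → Bool × Bool → Bool) : Bool × Bool × Bool × Bool × Bool :=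
  (S (false, false) (true, false), S (false, false) (false, true),
   S (false, false) (true, true), S (true, false) (true, true),
   S (false, true) (true, true))

lemma mk_ext {S} (hS : PB S) : mk (ext S) = S := by
  funext a b
  rcases a with ⟨a1, a2⟩
  rcases b with ⟨b1, b2⟩
  have h1 := hS.1 (a1, a2) (b1, b2)
  have h2 := hS.2.1 (a1, a2)
  cases a1 <;> cases a2 <;> cases b1 <;> cases b2 <;>
    (try rfl) <;> (try exact h2.symm) <;>
    · cases h : S (_, _) (_, _)
      · rfl
      · exact absurd (h1 h) (by decide)

lemma ext_mk (v : Bool × Bool × Bool × Bool × Bool) : ext (mk v) = v := rfl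

noncomputable def equivFull :
    {R : ℕ × ℕ → ℕ × ℕ → Prop // IsTransferSystemGrid 1 1 R} ≃
      {v : Bool × Bool × Bool × Bool × Bool // PB (mk v)} where
  toFun R := ⟨ext (shrink R.1), by rw [mk_ext (shrink_PB R.2)]; exact shrink_PB R.2⟩
  invFun v := ⟨lift (mk v.1), lift_isTS v.2⟩
  left_inv R := by
    apply Subtype.ext
    simp only [mk_ext (shrink_PB R.2)]
    exact lift_shrink R.2
  right_inv v := by
    apply Subtype.ext
    simp only [shrink_lift, ext_mk]

end TSAux

theorem num_transfer_systems_grid_2x2 :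
    Nat.card {R : ℕ × ℕ → ℕ × ℕ → Prop // IsTransferSystemGrid 1 1 R} = 10 := by
  rw [Nat.card_congr TSAux.equivFull, Nat.card_eq_fintype_card]
  decide
end
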